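/- Let n ≥ 2, 2 ≤ k ≤ n, and write points of ℝ^n as x = (ξ, η) with ξ ∈ ℝ^k and η ∈ ℝ^{n−k}. For λ ≥ 1 and a unit vector ξ̄ ∈ ℝ^k, define w_{λ,ξ̄}(ξ, η) = min(λ‖ξ − ⟨ξ, ξ̄⟩ξ̄‖ − ⟨ξ, ξ̄⟩, 0). If ξ₁, ξ₂ ∈ ℝ^k are unit vectors with ‖ξ₁ − ξ₂‖ ≥ 4/λ, then w_{λ,ξ₁}(x) · w_{λ,ξ₂}(x) = 0 for every x ∈ S^{n−1}. -/

import Mathlib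

/-!
The support of `w_{λ,v}` is the open cone `λ‖ξ - ⟨ξ,v⟩v‖ < ⟨ξ,v⟩` of half-angle `θ` with
`tan θ = 1/λ` around `v`. The chord from `ξ/‖ξ‖` to `v` is at most the tangent of the angle
between them, so on that cone `‖ξ/‖ξ‖ - v‖ < 1/λ`. Hence two such cones whose axes `ξ₁, ξ₂`
satisfy `‖ξ₁ - ξ₂‖ ≥ 2/λ` are disjoint, and at every point one of the two functions vanishes.
-/

open scoped InnerProductSpace

noncomputable section

/-- Euclidean space `ℝ^n`. -/
abbrev Eucl (n : ℕ) : Type := EuclideanSpace ℝ (Fin n)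

/-- The projection of `ℝ^n = ℝ^k × ℝ^{n-k}` onto the first factor `ℝ^k`
(in coordinates): `x = (ξ, η) ↦ ξ`. -/
def euclProj {n k : ℕ} (hkn : k ≤ n) (x : Eucl n) : Eucl k :=
  WithLp.toLp 2 (fun i => x (Fin.castLE hkn i))

/-- The function `w_{λ,ξ̄}(ξ, η) = min(λ‖ξ - ⟨ξ, ξ̄⟩ξ̄‖ - ⟨ξ, ξ̄⟩, 0)` on `ℝ^n`. -/
def wfun {n k : ℕ} (hkn : k ≤ n) (lam : ℝ) (ξb : Eucl k) (x : Eucl n) : ℝ :=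
  min (lam * ‖euclProj hkn x - ⟪euclProj hkn x, ξb⟫_ℝ • ξb‖ - ⟪euclProj hkn x, ξb⟫_ℝ) 0

section Cone

variable {E : Type*} [NormedAddCommGroup E] [InnerProductSpace ℝ E] {ξ v : E}

theorem norm_sub_inner_smul_sq (hv : ‖v‖ = 1) :
    ‖ξ - ⟪ξ, v⟫_ℝ • v‖ ^ 2 = ‖ξ‖ ^ 2 - ⟪ξ, v⟫_ℝ ^ 2 := by
  rw [norm_sub_sq_real, real_inner_smul_right, norm_smul, hv, mul_one, Real.norm_eq_abs, sq_abs]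
  ring

theorem norm_mul_norm_inv_norm_smul_sub_sq (hv : ‖v‖ = 1) (hξ : ξ ≠ 0) :
    ‖ξ‖ * ‖‖ξ‖⁻¹ • ξ - v‖ ^ 2 = 2 * (‖ξ‖ - ⟪ξ, v⟫_ℝ) := by
  have hr : ‖ξ‖ ≠ 0 := norm_ne_zero_iff.mpr hξ
  rw [norm_sub_sq_real, real_inner_smul_left, norm_smul, hv, norm_inv, norm_norm,
    inv_mul_cancel₀ hr]
  field_simp
  ring

theorem norm_inv_norm_smul_sub_mul_inner_le (hv : ‖v‖ = 1) (ht : 0 < ⟪ξ, v⟫_ℝ) :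
    ‖‖ξ‖⁻¹ • ξ - v‖ * ⟪ξ, v⟫_ℝ ≤ ‖ξ - ⟪ξ, v⟫_ℝ • v‖ := by
  set t := ⟪ξ, v⟫_ℝ
  set r := ‖ξ‖
  have hξ : ξ ≠ 0 := by
    rintro rfl
    simp [t] at ht
  have hr : 0 < r := norm_pos_iff.mpr hξ
  have htr : t ≤ r := by simpa [hv] using real_inner_le_norm ξ v
  have hchord := norm_mul_norm_inv_norm_smul_sub_sq hv hξ
  rw [← pow_le_pow_iff_left₀ (by positivity) (norm_nonneg _) two_ne_zero,
    norm_sub_inner_smul_sq hv, ← mul_le_mul_iff_right₀ hr]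
  -- after clearing denominators the inequality is `(r - t)² (r + 2t) ≥ 0`
  nlinarith [mul_nonneg (sq_nonneg (r - t)) (by linarith : 0 ≤ r + 2 * t)]

theorem mul_norm_inv_norm_smul_sub_lt_one {lam : ℝ} (hlam : 0 < lam) (hv : ‖v‖ = 1)
    (hcone : lam * ‖ξ - ⟪ξ, v⟫_ℝ • v‖ < ⟪ξ, v⟫_ℝ) :
    lam * ‖‖ξ‖⁻¹ • ξ - v‖ < 1 := by
  have ht : 0 < ⟪ξ, v⟫_ℝ := (by positivity : 0 ≤ lam * ‖ξ - ⟪ξ, v⟫_ℝ • v‖).trans_lt hcone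
  have hchord := mul_le_mul_of_nonneg_left (norm_inv_norm_smul_sub_mul_inner_le hv ht) hlam.le
  rw [← mul_lt_mul_iff_left₀ ht, one_mul, mul_assoc]
  exact hchord.trans_lt hcone

theorem mul_norm_sub_lt_two_of_mem_cones {lam : ℝ} (hlam : 0 < lam) {ξ₁ ξ₂ : E}
    (h₁ : ‖ξ₁‖ = 1) (h₂ : ‖ξ₂‖ = 1)
    (hcone₁ : lam * ‖ξ - ⟪ξ, ξ₁⟫_ℝ • ξ₁‖ < ⟪ξ, ξ₁⟫_ℝ)
    (hcone₂ : lam * ‖ξ - ⟪ξ, ξ₂⟫_ℝ • ξ₂‖ < ⟪ξ, ξ₂⟫_ℝ) :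
    lam * ‖ξ₁ - ξ₂‖ < 2 := by
  set u := ‖ξ‖⁻¹ • ξ
  have htriangle : ‖ξ₁ - ξ₂‖ ≤ ‖u - ξ₁‖ + ‖u - ξ₂‖ := by
    simpa only [norm_sub_rev ξ₁ u] using norm_sub_le_norm_sub_add_norm_sub ξ₁ u ξ₂
  nlinarith [mul_norm_inv_norm_smul_sub_lt_one hlam h₁ hcone₁,
    mul_norm_inv_norm_smul_sub_lt_one hlam h₂ hcone₂]

end Cone

theorem wfun_ne_zero_iff {n k : ℕ} (hkn : k ≤ n) (lam : ℝ) (ξb : Eucl k) (x : Eucl n) :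
    wfun hkn lam ξb x ≠ 0 ↔
      lam * ‖euclProj hkn x - ⟪euclProj hkn x, ξb⟫_ℝ • ξb‖ < ⟪euclProj hkn x, ξb⟫_ℝ := by
  rw [wfun, ne_eq, min_eq_right_iff, not_le, sub_neg]

theorem distant_points_give_orthogonal_w_general (n k : ℕ)
    (hkn : k ≤ n) (lam : ℝ) (hlam : 1 ≤ lam)
    (ξ₁ ξ₂ : Eucl k) (h₁ : ‖ξ₁‖ = 1) (h₂ : ‖ξ₂‖ = 1)
    (hsep : 4 / lam ≤ ‖ξ₁ - ξ₂‖) :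
    ∀ x : Eucl n, ‖x‖ = 1 → wfun hkn lam ξ₁ x * wfun hkn lam ξ₂ x = 0 := by
  intro x _
  by_contra hne
  obtain ⟨hw₁, hw₂⟩ := mul_ne_zero_iff.mp hne
  have hlam0 : 0 < lam := by linarith
  have hclose := mul_norm_sub_lt_two_of_mem_cones hlam0 h₁ h₂
    ((wfun_ne_zero_iff hkn lam ξ₁ x).mp hw₁) ((wfun_ne_zero_iff hkn lam ξ₂ x).mp hw₂)
  have hfar : 4 ≤ lam * ‖ξ₁ - ξ₂‖ := by rwa [div_le_iff₀' hlam0] at hsep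
  linarith

/-- If `ξ₁, ξ₂` are unit vectors of `ℝ^k` with `‖ξ₁ - ξ₂‖ ≥ 4/λ` (`λ ≥ 1`), then
the functions `w_{λ,ξ₁}` and `w_{λ,ξ₂}` have pointwise product zero on the unit
sphere of `ℝ^n`. -/
theorem distant_points_give_orthogonal_w (n k : ℕ) (hn : 2 ≤ n) (hk : 2 ≤ k)
    (hkn : k ≤ n) (lam : ℝ) (hlam : 1 ≤ lam)
    (ξ₁ ξ₂ : Eucl k) (h₁ : ‖ξ₁‖ = 1) (h₂ : ‖ξ₂‖ = 1)
    (hsep : 4 / lam ≤ ‖ξ₁ - ξ₂‖) :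
    ∀ x : Eucl n, ‖x‖ = 1 → wfun hkn lam ξ₁ x * wfun hkn lam ξ₂ x = 0 :=
  distant_points_give_orthogonal_w_general n k hkn lam hlam ξ₁ ξ₂ h₁ h₂ hsep
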